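/- The Crank–Nicolson finite difference scheme for the 1D NLSE with homogeneous Dirichlet boundary conditions conserves the discrete mass: if (ψ_j^{n+1}) satisfies the CNFD equations, then h∑_{j=1}^{J−1} |ψ_j^{n+1}|² = h∑_{j=1}^{J−1} |ψ_j^n|². -/

import Mathlib

/-!
Multiply the `j`-th equation by `conj (ψⱼⁿ⁺¹ + ψⱼⁿ)`, sum over `j` and take imaginary parts.
The potential and nonlinear terms contribute a real multiple of `|ψⱼⁿ⁺¹ + ψⱼⁿ|²`, and the
discrete Laplacian contributes a real number by summation by parts with the Dirichlet boundary
values, so `(ε / τ) ∑ (|ψⱼⁿ⁺¹|² - |ψⱼⁿ|²) = 0`.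
-/

open Complex ComplexConjugate

lemma re_sub_mul_conj_add (z w : ℂ) : ((z - w) * conj (z + w)).re = ‖z‖ ^ 2 - ‖w‖ ^ 2 := by
  simp only [Complex.sq_norm, normSq_apply, mul_re, sub_re, sub_im, map_add, add_re, add_im,
    conj_re, conj_im]
  ring

lemma mul_re_mul_conj_eq_of_eq {α β c : ℝ} {d L φ : ℂ} (h : I * α * d = β * L + c * φ) :
    α * (d * conj φ).re = β * (L * conj φ).im := by
  have h' := congrArg (fun z => (z * conj φ).im) h
  simp only [mul_im, mul_re, add_mul, add_im, I_re, I_im, ofReal_re, ofReal_im, conj_re,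
    conj_im] at h' ⊢
  linear_combination h'

lemma im_sum_discreteLaplacian_mul_conj_eq_zero {φ : ℕ → ℂ} {J : ℕ} (h0 : φ 0 = 0)
    (hJ : φ J = 0) :
    (∑ j ∈ Finset.Ico 1 J, (φ (j + 1) - 2 * φ j + φ (j - 1)) * conj (φ j)).im = 0 := by
  rcases Nat.eq_zero_or_pos J with rfl | hJpos
  · simp
  set g : ℕ → ℝ := fun i => (φ i * conj (φ (i - 1))).im
  have hterm : ∀ j ∈ Finset.Ico 1 J,
      ((φ (j + 1) - 2 * φ j + φ (j - 1)) * conj (φ j)).im = g (j + 1) - g j := by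
    intro j _
    simp only [g, Nat.add_sub_cancel, mul_im, sub_re, sub_im, add_re, add_im, mul_re,
      conj_re, conj_im, re_ofNat, im_ofNat]
    ring
  rw [im_sum, Finset.sum_congr rfl hterm, Finset.sum_Ico_sub g hJpos]
  simp [g, h0, hJ]

theorem cnfd_mass_conservation_general
    (ε τ h : ℝ) (hε : 0 < ε) (hτ : 0 < τ)
    (J : ℕ) (V : ℕ → ℝ) (f : ℝ → ℝ)
    (a b : ℕ → ℂ)
    (ha0 : a 0 = 0) (haJ : a J = 0) (hb0 : b 0 = 0) (hbJ : b J = 0)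
    (hscheme : ∀ j, 1 ≤ j → j ≤ J - 1 →
      Complex.I * (ε : ℂ) * (b j - a j) / (τ : ℂ)
        = -((ε : ℂ) ^ 2 / 4) *
            ((b (j + 1) - 2 * b j + b (j - 1)) / (h : ℂ) ^ 2
              + (a (j + 1) - 2 * a j + a (j - 1)) / (h : ℂ) ^ 2)
          + ((V j + ∫ θ in (0 : ℝ)..1,
                f (θ * ‖b j‖ ^ 2 + (1 - θ) * ‖a j‖ ^ 2) : ℝ) : ℂ)
            * (b j + a j) / 2) :
    h * ∑ j ∈ Finset.Ico 1 J, ‖b j‖ ^ 2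
      = h * ∑ j ∈ Finset.Ico 1 J, ‖a j‖ ^ 2 := by
  set φ : ℕ → ℂ := fun j => b j + a j
  set β : ℝ := -(ε ^ 2 / (4 * h ^ 2))
  have hpointwise : ∀ j ∈ Finset.Ico 1 J, ε / τ * (‖b j‖ ^ 2 - ‖a j‖ ^ 2)
      = β * ((φ (j + 1) - 2 * φ j + φ (j - 1)) * conj (φ j)).im := by
    intro j hj
    obtain ⟨hj1, hjJ⟩ := Finset.mem_Ico.mp hj
    have hs := hscheme j hj1 (by omega)
    set c : ℝ := V j + ∫ θ in (0 : ℝ)..1, f (θ * ‖b j‖ ^ 2 + (1 - θ) * ‖a j‖ ^ 2)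
    rw [← re_sub_mul_conj_add]
    refine mul_re_mul_conj_eq_of_eq (c := c / 2) ?_
    push_cast [φ, β]
    linear_combination hs
  have hmass : ε / τ * ∑ j ∈ Finset.Ico 1 J, (‖b j‖ ^ 2 - ‖a j‖ ^ 2) = 0 := by
    rw [Finset.mul_sum, Finset.sum_congr rfl hpointwise, ← Finset.mul_sum, ← im_sum,
      im_sum_discreteLaplacian_mul_conj_eq_zero (by simp [φ, ha0, hb0]) (by simp [φ, haJ, hbJ]),
      mul_zero]
  rw [mul_eq_zero, or_iff_right (div_ne_zero hε.ne' hτ.ne'), Finset.sum_sub_distrib,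
    sub_eq_zero] at hmass
  rw [hmass]

/-- The Crank–Nicolson finite difference (CNFD) scheme for the 1D NLSE with
homogeneous Dirichlet boundary conditions conserves the discrete mass:
`h ∑_{j=1}^{J−1} |ψ_j^{n+1}|² = h ∑_{j=1}^{J−1} |ψ_j^n|²`.  Here `a = ψ^n` and
`b = ψ^{n+1}`, and `G(ρ₁,ρ₂) = ∫₀¹ f(θρ₁ + (1−θ)ρ₂) dθ`. -/
theorem cnfd_mass_conservation
    (ε τ h : ℝ) (hε : 0 < ε) (hτ : 0 < τ) (hh : 0 < h)
    (J : ℕ) (hJ : 2 ≤ J) (V : ℕ → ℝ) (f : ℝ → ℝ) (hf : Continuous f)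
    (a b : ℕ → ℂ)
    (ha0 : a 0 = 0) (haJ : a J = 0) (hb0 : b 0 = 0) (hbJ : b J = 0)
    (hscheme : ∀ j, 1 ≤ j → j ≤ J - 1 →
      Complex.I * (ε : ℂ) * (b j - a j) / (τ : ℂ)
        = -((ε : ℂ) ^ 2 / 4) *
            ((b (j + 1) - 2 * b j + b (j - 1)) / (h : ℂ) ^ 2
              + (a (j + 1) - 2 * a j + a (j - 1)) / (h : ℂ) ^ 2)
          + ((V j + ∫ θ in (0 : ℝ)..1,
                f (θ * ‖b j‖ ^ 2 + (1 - θ) * ‖a j‖ ^ 2) : ℝ) : ℂ)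
            * (b j + a j) / 2) :
    h * ∑ j ∈ Finset.Ico 1 J, ‖b j‖ ^ 2
      = h * ∑ j ∈ Finset.Ico 1 J, ‖a j‖ ^ 2 :=
  cnfd_mass_conservation_general ε τ h hε hτ J V f a b ha0 haJ hb0 hbJ hscheme
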